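/- arXiv:1603.07197 — 5 statements merged into one kernel-verified Lean document; each statement's English description precedes it below -/
import Mathlib

section
/- Let G be a discrete group and p a prime. The natural map H^2(Ĝ_(p); Z/p) → H^2(G; Z/p) induced by G → Ĝ_(p) is injective. Concretely: if a central extension 1 → Z/p → H → Ĝ_(p) → 1 of pro-p groups pulls back along G → Ĝ_(p) to a split central extension of G by Z/p, then the original extension splits (admits a continuous group-theoretic section). -/
/-!
The splitting `G → P` gives a lift `t : G →* H` of `ι`. Since `ker π` is finite, some open
normal subgroup `N` of `H` meets it trivially; `H ⧸ N` is a finite `p`-group, so `t` followed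
by `H → H ⧸ N` extends to a continuous `φ : K →* H ⧸ N`. The closed subgroup
`Γ = {h | h N = φ (π h)}` then meets `ker π` trivially, and `π '' Γ` is compact and contains
the dense set `ι '' G`, so `π` maps the compact group `Γ` bijectively, hence homeomorphically,
onto `K`; its inverse is the section.
-/

/-- A topological group is a pro-`p` group if it is a compact, Hausdorff, totally
disconnected topological group all of whose continuous finite quotients are `p`-groups. -/
structure IsProPGroup (p : ℕ) (K : Type*) [Group K] [TopologicalSpace K] : Prop where
  topGroup : IsTopologicalGroup K
  compact : CompactSpace K
  t2 : T2Space K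
  totallyDisconnected : TotallyDisconnectedSpace K
  quot_isPGroup : ∀ (N : Subgroup K) [N.Normal], IsOpen (N : Set K) → IsPGroup p (K ⧸ N)

/-- `ι : G →* K` exhibits the pro-`p` group `K` as the pro-`p` completion of the
discrete group `G`. -/
structure IsProPCompletion (p : ℕ) (G : Type*) [Group G] (K : Type*) [Group K]
    [TopologicalSpace K] (ι : G →* K) : Prop where
  proP : IsProPGroup p K
  dense : DenseRange ι
  universal : ∀ (F : Type) [Group F] [Finite F] [TopologicalSpace F] [DiscreteTopology F],
    IsPGroup p F → ∀ f : G →* F, ∃! φ : K →* F, Continuous φ ∧ φ.comp ι = f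

/-- The pull-back `P = {(g,h) ∈ G × H : ι g = π h}` of a pair of homomorphisms
`ι : G →* K`, `π : H →* K`, as a subgroup of `G × H`. -/
def extensionPullback {G H K : Type*} [Group G] [Group H] [Group K]
    (ι : G →* K) (π : H →* K) : Subgroup (G × H) where
  carrier := {x | ι x.1 = π x.2}
  one_mem' := by simp
  mul_mem' := by
    intro a b ha hb
    simp only [Set.mem_setOf_eq, Prod.fst_mul, Prod.snd_mul, map_mul] at *
    rw [ha, hb]
  inv_mem' := by
    intro a ha
    simp only [Set.mem_setOf_eq, Prod.fst_inv, Prod.snd_inv, map_inv] at *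
    rw [ha]

theorem MonoidHom.exists_comp_eq_of_pullback_section {G H K : Type*} [Group G] [Group H]
    [Group K] {ι : G →* K} {π : H →* K}
    (hsplit : ∃ s : G →* extensionPullback ι π, ∀ g : G, (s g : G × H).1 = g) :
    ∃ t : G →* H, π.comp t = ι := by
  obtain ⟨s, hs⟩ := hsplit
  refine ⟨(MonoidHom.snd G H).comp ((extensionPullback ι π).subtype.comp s), ?_⟩
  ext g
  have hmem : ι (s g : G × H).1 = π (s g : G × H).2 := (s g).2
  simp only [MonoidHom.comp_apply, MonoidHom.coe_snd, Subgroup.subtype_apply, ← hmem, hs g]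

theorem exists_openNormalSubgroup_inter_subset_one_of_finite {H : Type*} [Group H]
    [TopologicalSpace H] [IsTopologicalGroup H] [CompactSpace H] [T2Space H]
    [TotallyDisconnectedSpace H] {S : Set H} (hS : S.Finite) :
    ∃ N : OpenNormalSubgroup H, ∀ h ∈ N, h ∈ S → h = 1 := by
  have hopen : IsOpen (S \ {1})ᶜ := hS.sdiff.isClosed.isOpen_compl
  obtain ⟨N, hN⟩ := ProfiniteGrp.exist_openNormalSubgroup_sub_open_nhds_of_one hopen (by simp)
  exact ⟨N, fun h hN' hS' => by simpa [hS'] using hN hN'⟩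

theorem MonoidHom.exists_continuous_section_of_injOn_of_dense {H K : Type*} [Group H]
    [TopologicalSpace H] [CompactSpace H] [Group K] [TopologicalSpace K] [T2Space K]
    (π : H →* K) (hπ : Continuous π) (Γ : Subgroup H) (hΓ : IsClosed (Γ : Set H))
    (hinj : Set.InjOn π Γ) (hdense : Dense (π '' Γ)) :
    ∃ σ : K →* H, Continuous σ ∧ π.comp σ = MonoidHom.id K := by
  have : CompactSpace Γ := isCompact_iff_compactSpace.mp hΓ.isCompact
  let f : Γ →* K := π.comp Γ.subtype
  have hfcont : Continuous f := hπ.comp continuous_subtype_val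
  have hfinj : Function.Injective f := fun a b hab => Subtype.ext (hinj a.2 b.2 hab)
  have hfsurj : Function.Surjective f := by
    have hclosed : IsClosed (π '' Γ) := (hΓ.isCompact.image hπ).isClosed
    intro k
    obtain ⟨h, hΓh, rfl⟩ : k ∈ π '' Γ := hclosed.closure_eq ▸ hdense k
    exact ⟨⟨h, hΓh⟩, rfl⟩
  let e : Γ ≃* K := MulEquiv.ofBijective f ⟨hfinj, hfsurj⟩
  refine ⟨Γ.subtype.comp e.symm.toMonoidHom, ?_, ?_⟩
  · exact continuous_subtype_val.comp
      (hfcont.continuous_symm_of_equiv_compact_to_t2 (f := e.toEquiv))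
  · ext k
    exact e.apply_symm_apply k

theorem MonoidHom.exists_continuous_section_of_lift_mod_openNormalSubgroup {G H K : Type*}
    [Group G] [Group H] [TopologicalSpace H] [IsTopologicalGroup H] [CompactSpace H]
    [Group K] [TopologicalSpace K] [T2Space K]
    (π : H →* K) (hπ : Continuous π) (N : OpenNormalSubgroup H)
    (hN : ∀ h ∈ N, h ∈ π.ker → h = 1) {ι : G →* K} (hι : DenseRange ι)
    (t : G →* H) (ht : π.comp t = ι) (φ : K →* H ⧸ (N : Subgroup H)) (hφ : Continuous φ)
    (hφι : φ.comp ι = (QuotientGroup.mk' (N : Subgroup H)).comp t) :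
    ∃ σ : K →* H, Continuous σ ∧ π.comp σ = MonoidHom.id K := by
  let mk := QuotientGroup.mk' (N : Subgroup H)
  let Γ : Subgroup H := MonoidHom.eqLocus mk (φ.comp π)
  have hΓ : IsClosed (Γ : Set H) := isClosed_eq QuotientGroup.continuous_mk (hφ.comp hπ)
  have hinj : Set.InjOn π Γ := by
    intro a ha b hb hab
    have hker : a⁻¹ * b ∈ π.ker := by simp [MonoidHom.mem_ker, hab]
    have hmk : mk a = mk b := by
      rw [show mk a = φ (π a) from ha, show mk b = φ (π b) from hb, hab]
    exact inv_mul_eq_one.mp (hN _ ((QuotientGroup.eq).mp hmk) hker)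
  have hrange : Set.range ι ⊆ π '' Γ := by
    rintro _ ⟨g, rfl⟩
    have hπt : π (t g) = ι g := DFunLike.congr_fun ht g
    refine ⟨t g, ?_, hπt⟩
    change mk (t g) = φ (π (t g))
    rw [hπt]
    exact (DFunLike.congr_fun hφι g).symm
  exact π.exists_continuous_section_of_injOn_of_dense hπ Γ hΓ hinj (hι.mono hrange)

theorem h2_proPCompletion_injective_general (p : ℕ) [Fact p.Prime]
    (G : Type) [Group G] (K : Type) [Group K] [TopologicalSpace K]
    (ι : G →* K) (hK : IsProPCompletion p G K ι)
    (H : Type) [Group H] [TopologicalSpace H] (hH : IsProPGroup p H)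
    (π : H →* K) (hπcont : Continuous π)
    (hcard : Nat.card π.ker = p)
    (hsplit : ∃ s : G →* (extensionPullback ι π), ∀ g : G, ((s g : G × H).1) = g) :
    ∃ σ : K →* H, Continuous σ ∧ π.comp σ = MonoidHom.id K := by
  have := hK.proP.t2
  have := hH.topGroup
  have := hH.compact
  have := hH.t2
  have := hH.totallyDisconnected
  obtain ⟨t, ht⟩ := MonoidHom.exists_comp_eq_of_pullback_section hsplit
  have : Finite π.ker :=
    Nat.finite_of_card_ne_zero (hcard ▸ (Fact.out : p.Prime).ne_zero)
  obtain ⟨N, hN⟩ :=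
    exists_openNormalSubgroup_inter_subset_one_of_finite (Set.toFinite (π.ker : Set H))
  have hNopen : IsOpen ((N : Subgroup H) : Set H) := N.isOpen'
  have := QuotientGroup.discreteTopology hNopen
  have := Subgroup.quotient_finite_of_isOpen _ hNopen
  obtain ⟨φ, ⟨hφ, hφι⟩, -⟩ := hK.universal (H ⧸ (N : Subgroup H))
    (hH.quot_isPGroup _ hNopen) ((QuotientGroup.mk' (N : Subgroup H)).comp t)
  exact π.exists_continuous_section_of_lift_mod_openNormalSubgroup hπcont N hN hK.dense
    t ht φ hφ hφι

/-- The natural map `H²(Ĝ₍ₚ₎; ℤ/p) → H²(G; ℤ/p)` is injective: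
if a central extension `1 → ℤ/p → H → Ĝ₍ₚ₎ → 1` of pro-`p` groups pulls back along
`ι : G → Ĝ₍ₚ₎` to a split central extension of `G` by `ℤ/p`, then the original
extension admits a continuous group-theoretic section. -/
theorem h2_proPCompletion_injective (p : ℕ) [Fact p.Prime]
    (G : Type) [Group G] (K : Type) [Group K] [TopologicalSpace K]
    (ι : G →* K) (hK : IsProPCompletion p G K ι)
    (H : Type) [Group H] [TopologicalSpace H] (hH : IsProPGroup p H)
    (π : H →* K) (hπcont : Continuous π) (hπsurj : Function.Surjective π)
    (hcentral : π.ker ≤ Subgroup.center H) (hcard : Nat.card π.ker = p)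
    (hsplit : ∃ s : G →* (extensionPullback ι π), ∀ g : G, ((s g : G × H).1) = g) :
    ∃ σ : K →* H, Continuous σ ∧ π.comp σ = MonoidHom.id K :=
  h2_proPCompletion_injective_general p G K ι hK H hH π hπcont hcard hsplit
end

section
/- Let 1 → Z/p → H → Ĝ_(p) → 1 be a central extension of the pro-p completion of a discrete group G by Z/p, and let P be its pull-back along ι: G → Ĝ_(p). If the pull-back extension of G splits, then H is isomorphic, as a topological group over Ĝ_(p), to the pro-p completion of P. -/
/-!
Write `t : G → H` for the second component of the splitting, so that `π ∘ t = ι`, and `C` for the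
closure of `t G`. As `H` is compact and `ι` has dense image, `π C = Ĝ₍ₚ₎`, i.e. `H = C · ker π`.
If `ker π ≅ ℤ/p` met `C` it would lie in `C`, so `t` would have dense range; then every map from `H`
to a finite `p`-group would factor through `π`, and `ker π` would lie in every open normal
subgroup of the profinite group `H`, which is absurd. Hence `H = C × ker π` with `C` open and
normal (`ker π` being central), and a map `f : P → F` to a finite `p`-group extends to `H` as
`h ↦ ψ (π h) · f (1, ζ h)`, where `ψ` extends `f ∘ s` to `Ĝ₍ₚ₎` and `ζ : H → ker π` is the
projection along `C`.
-/

namespace Subgroup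

variable {H : Type*} [Group H] {C Z : Subgroup H}

theorem disjoint_or_le_of_card_prime (hZ : (Nat.card Z).Prime) : Disjoint C Z ∨ Z ≤ C := by
  have : Fact (Nat.card Z).Prime := ⟨hZ⟩
  rw [← subgroupOf_eq_bot, ← subgroupOf_eq_top]
  exact (C.subgroupOf Z).eq_bot_or_eq_top_of_prime_card

theorem normal_of_sup_eq_top_of_le_center (hsup : C ⊔ Z = ⊤) (hZ : Z ≤ center H) : C.Normal := by
  rw [← normalizer_eq_top_iff, eq_top_iff, ← hsup]
  exact sup_le le_normalizer (hZ.trans (center_le_normalizer _))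

theorem isComplement'_of_disjoint_of_sup_eq_top [Z.Normal] (hdisj : Disjoint Z C)
    (hsup : Z ⊔ C = ⊤) : IsComplement' Z C :=
  isComplement'_of_disjoint_and_mul_eq_univ hdisj (by rw [← normal_mul, hsup, coe_top])

namespace IsComplement'

noncomputable def projection [C.Normal] (h : IsComplement' Z C) : H →* Z :=
  h.QuotientMulEquiv.toMonoidHom.comp (QuotientGroup.mk' C)

variable [C.Normal] (h : IsComplement' Z C)

theorem projection_eq_one {c : H} (hc : c ∈ C) : h.projection c = 1 := by
  simp only [projection, MonoidHom.coe_comp, Function.comp_apply, QuotientGroup.mk'_apply,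
    (QuotientGroup.eq_one_iff c).2 hc, map_one]

theorem projection_coe (z : Z) : h.projection z = z :=
  (h.QuotientMulEquiv.eq_symm_apply).1 rfl

theorem continuous_projection [TopologicalSpace H] [IsTopologicalGroup H]
    (hC : IsOpen (C : Set H)) : Continuous h.projection := by
  have := QuotientGroup.discreteTopology hC
  exact (continuous_of_discreteTopology (f := h.QuotientMulEquiv)).comp continuous_quotient_mk'

end IsComplement'

theorem topologicalClosure_sup_ker_eq_top {K : Type*} [Group K] [TopologicalSpace H]
    [IsTopologicalGroup H] [CompactSpace H] [TopologicalSpace K] [T2Space K] {π : H →* K}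
    (hπ : Continuous π) {S : Subgroup H} (hS : Dense (π '' S)) :
    S.topologicalClosure ⊔ π.ker = ⊤ := by
  have hmap : S.topologicalClosure.map π = ⊤ := by
    rw [← coe_eq_univ, coe_map, topologicalClosure_coe,
      ← hπ.isClosedMap.closure_image_eq_of_continuous hπ, hS.closure_eq]
  rw [← comap_map_eq, hmap, comap_top]

end Subgroup

theorem eq_one_of_forall_mem_openNormalSubgroup {H : Type*} [Group H] [TopologicalSpace H]
    [IsTopologicalGroup H] [CompactSpace H] [T2Space H] [TotallyDisconnectedSpace H] {x : H}
    (hx : ∀ N : OpenNormalSubgroup H, x ∈ N) : x = 1 := by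
  by_contra hx1
  obtain ⟨N, hN⟩ := ProfiniteGrp.exist_openNormalSubgroup_sub_open_nhds_of_one
    isOpen_compl_singleton (Set.mem_compl_singleton_iff.2 (Ne.symm hx1))
  exact hN (hx N) rfl

theorem MonoidHom.denseRange_iff_topologicalClosure_range_eq_top {P H : Type*} [Group P]
    [Group H] [TopologicalSpace H] [IsTopologicalGroup H] {f : P →* H} :
    DenseRange f ↔ f.range.topologicalClosure = ⊤ := by
  rw [denseRange_iff_closure_range, ← Subgroup.coe_eq_univ, Subgroup.topologicalClosure_coe,
    MonoidHom.coe_range]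

namespace extensionPullback

variable {G H K : Type*} [Group G] [Group H] [Group K] (ι : G →* K) (π : H →* K)

theorem mem_iff {x : G × H} : x ∈ extensionPullback ι π ↔ ι x.1 = π x.2 := Iff.rfl

def fst : extensionPullback ι π →* G := (MonoidHom.fst G H).comp (extensionPullback ι π).subtype

def snd : extensionPullback ι π →* H := (MonoidHom.snd G H).comp (extensionPullback ι π).subtype

@[simp]
theorem fst_apply (x : extensionPullback ι π) : fst ι π x = (x : G × H).1 := rfl

@[simp]
theorem snd_apply (x : extensionPullback ι π) : snd ι π x = (x : G × H).2 := rfl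

theorem comp_fst_eq_comp_snd : ι.comp (fst ι π) = π.comp (snd ι π) := MonoidHom.ext fun x => x.2

def inr : π.ker →* extensionPullback ι π :=
  ((MonoidHom.inr G H).comp π.ker.subtype).codRestrict _ fun z => by
    rw [mem_iff]
    exact (map_one ι).trans (π.mem_ker.1 z.2).symm

variable {ι π}

theorem comp_snd_comp_eq {s : G →* extensionPullback ι π} (hs : (fst ι π).comp s = .id G) :
    π.comp ((snd ι π).comp s) = ι := by
  rw [← MonoidHom.comp_assoc, ← comp_fst_eq_comp_snd, MonoidHom.comp_assoc, hs, MonoidHom.comp_id]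

theorem denseRange_snd [TopologicalSpace H] [IsTopologicalGroup H] {s : G →* extensionPullback ι π}
    (hsup : ((snd ι π).comp s).range.topologicalClosure ⊔ π.ker = ⊤) : DenseRange (snd ι π) := by
  have hker : π.ker ≤ (snd ι π).range := fun z hz => ⟨inr ι π ⟨z, hz⟩, rfl⟩
  rw [MonoidHom.denseRange_iff_topologicalClosure_range_eq_top, eq_top_iff, ← hsup]
  exact sup_le (Subgroup.topologicalClosure_mono fun _ ⟨g, hg⟩ => ⟨s g, hg⟩)
    (hker.trans (Subgroup.le_topologicalClosure _))

theorem inr_mem_center (hZ : π.ker ≤ Subgroup.center H) (z : π.ker) :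
    inr ι π z ∈ Subgroup.center (extensionPullback ι π) :=
  Subgroup.mem_center_iff.2 fun x => Subtype.ext <| Prod.ext (by simp [inr])
    (Subgroup.mem_center_iff.1 (hZ z.2) x.1.2)

theorem fst_mul_inr_snd {s : G →* extensionPullback ι π} (hs : (fst ι π).comp s = .id G)
    {ζ : H →* π.ker} (hζs : ∀ g, ζ (snd ι π (s g)) = 1) (hζ : ∀ z : π.ker, ζ z = z)
    (x : extensionPullback ι π) : s (fst ι π x) * inr ι π (ζ (snd ι π x)) = x := by
  obtain ⟨⟨g, h⟩, hx⟩ := x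
  have hsg : (s g : G × H).1 = g := DFunLike.congr_fun hs g
  have hu : (s g : G × H).2⁻¹ * h ∈ π.ker := by
    rw [MonoidHom.mem_ker, map_mul, map_inv, ← (s g).2, hsg, ← (mem_iff ι π).1 hx,
      inv_mul_cancel]
  have hζh : ζ h = ⟨_, hu⟩ := calc
    ζ h = ζ ((s g : G × H).2 * ((s g : G × H).2⁻¹ * h)) := by rw [mul_inv_cancel_left]
    _ = ⟨_, hu⟩ := by
      rw [map_mul, show ζ (s g : G × H).2 = 1 from hζs g, one_mul]
      exact hζ ⟨_, hu⟩
  refine Subtype.ext (Prod.ext ?_ ?_)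
  · simp [inr, hsg]
  · simp [inr, hζh]

end extensionPullback

namespace IsProPCompletion

variable {p : ℕ} {G K H : Type} [Group G] [Group K] [TopologicalSpace K] [Group H]
  [TopologicalSpace H] {ι : G →* K}

theorem of_denseRange {P : Type*} [Group P] {j : P →* H} (hH : IsProPGroup p H)
    (hj : DenseRange j)
    (hext : ∀ (F : Type) [Group F] [Finite F] [TopologicalSpace F] [DiscreteTopology F],
      IsPGroup p F → ∀ f : P →* F, ∃ φ : H →* F, Continuous φ ∧ φ.comp j = f) :
    IsProPCompletion p P H j := by
  refine ⟨hH, hj, fun F _ _ _ _ hF f => ?_⟩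
  obtain ⟨φ, hφ, hφj⟩ := hext F hF f
  refine ⟨φ, ⟨hφ, hφj⟩, fun φ' ⟨hφ', hφ'j⟩ => DFunLike.coe_injective ?_⟩
  exact hj.equalizer hφ' hφ (congrArg DFunLike.coe (hφ'j.trans hφj.symm))

/-- Every map from `H` to a finite `p`-group factors through `π`, since it does on the dense
image of `t`. -/
theorem ker_eq_bot_of_denseRange (hK : IsProPCompletion p G K ι) (hH : IsProPGroup p H)
    {π : H →* K} (hπ : Continuous π) {t : G →* H} (hπt : π.comp t = ι) (ht : DenseRange t) :
    π.ker = ⊥ := by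
  have := hH.topGroup; have := hH.compact; have := hH.t2; have := hH.totallyDisconnected
  refine (Subgroup.eq_bot_iff_forall _).2 fun z hz =>
    eq_one_of_forall_mem_openNormalSubgroup fun N => ?_
  have := QuotientGroup.discreteTopology N.isOpen'
  have := N.toSubgroup.quotient_finite_of_isOpen N.isOpen'
  obtain ⟨ψ, ⟨hψ, hψι⟩, -⟩ :=
    hK.universal _ (hH.quot_isPGroup N N.isOpen') ((QuotientGroup.mk' N.toSubgroup).comp t)
  have hfactor : ψ.comp π = QuotientGroup.mk' N.toSubgroup := by
    refine DFunLike.coe_injective (ht.equalizer (hψ.comp hπ) continuous_quotient_mk' ?_)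
    rw [← MonoidHom.coe_comp, MonoidHom.comp_assoc, hπt, hψι, MonoidHom.coe_comp]
  refine (QuotientGroup.eq_one_iff z).1 ?_
  rw [← QuotientGroup.mk'_apply, ← hfactor, MonoidHom.comp_apply, π.mem_ker.1 hz, map_one]

theorem topologicalClosure_range_sup_ker_eq_top [IsTopologicalGroup H] [CompactSpace H]
    (hK : IsProPCompletion p G K ι) {π : H →* K} (hπ : Continuous π) {t : G →* H}
    (hπt : π.comp t = ι) : t.range.topologicalClosure ⊔ π.ker = ⊤ := by
  have := hK.proP.t2
  refine Subgroup.topologicalClosure_sup_ker_eq_top hπ ?_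
  rw [MonoidHom.coe_range, ← Set.range_comp, ← MonoidHom.coe_comp, hπt]
  exact hK.dense

theorem disjoint_topologicalClosure_range_ker [IsTopologicalGroup H]
    (hK : IsProPCompletion p G K ι) (hH : IsProPGroup p H) {π : H →* K} (hπ : Continuous π)
    (hp : p.Prime)
    (hcard : Nat.card π.ker = p) {t : G →* H} (hπt : π.comp t = ι) :
    Disjoint t.range.topologicalClosure π.ker := by
  have := hH.compact
  refine (Subgroup.disjoint_or_le_of_card_prime (hcard ▸ hp)).resolve_right fun hle => ?_
  have hsup := hK.topologicalClosure_range_sup_ker_eq_top hπ hπt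
  have ht : DenseRange t := MonoidHom.denseRange_iff_topologicalClosure_range_eq_top.2 <| by
    rwa [sup_eq_left.2 hle] at hsup
  rw [hK.ker_eq_bot_of_denseRange hH hπ hπt ht, Subgroup.card_bot] at hcard
  exact hp.one_lt.ne hcard

open extensionPullback in
theorem exists_continuous_comp_snd_eq (hK : IsProPCompletion p G K ι) {π : H →* K}
    (hπ : Continuous π) (hZ : π.ker ≤ Subgroup.center H) [DiscreteTopology π.ker]
    {s : G →* extensionPullback ι π} (hs : (fst ι π).comp s = .id G) {ζ : H →* π.ker}
    (hζcont : Continuous ζ) (hζs : ∀ g, ζ (snd ι π (s g)) = 1) (hζ : ∀ z : π.ker, ζ z = z)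
    {F : Type} [Group F] [Finite F] [TopologicalSpace F] [DiscreteTopology F] (hF : IsPGroup p F)
    (f : extensionPullback ι π →* F) :
    ∃ φ : H →* F, Continuous φ ∧ φ.comp (snd ι π) = f := by
  obtain ⟨ψ, ⟨hψ, hψι⟩, -⟩ := hK.universal F hF (f.comp s)
  have hcomm (k : K) (z : π.ker) : Commute (ψ k) (f (inr ι π z)) := by
    refine hK.dense.induction_on (p := fun k => Commute (ψ k) (f (inr ι π z))) k
      ((isClosed_discrete {a | Commute a (f (inr ι π z))}).preimage hψ) fun g => ?_
    rw [← MonoidHom.comp_apply, hψι, MonoidHom.comp_apply]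
    exact (show Commute (s g) _ from Subgroup.mem_center_iff.1 (inr_mem_center hZ z) (s g)).map f
  refine ⟨(ψ.noncommCoprod (f.comp (inr ι π)) hcomm).comp (π.prod ζ), ?_, ?_⟩
  · exact (hψ.comp hπ).mul ((continuous_of_discreteTopology (f := f.comp (inr ι π))).comp hζcont)
  · ext x
    conv_rhs => rw [← fst_mul_inr_snd hs hζs hζ x]
    simp only [MonoidHom.comp_apply, MonoidHom.noncommCoprod_apply, MonoidHom.prod_apply, map_mul]
    rw [← MonoidHom.comp_apply π, ← comp_fst_eq_comp_snd, MonoidHom.comp_apply,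
      ← MonoidHom.comp_apply ψ, hψι, MonoidHom.comp_apply]

end IsProPCompletion

theorem proPCompletion_of_pullback_general (p : ℕ) [Fact p.Prime]
    (G : Type) [Group G]
    (K : Type) [Group K] [TopologicalSpace K]
    (ι : G →* K) (hK : IsProPCompletion p G K ι)
    (H : Type) [Group H] [TopologicalSpace H] (hH : IsProPGroup p H)
    (π : H →* K) (hπcont : Continuous π)
    (hcentral : π.ker ≤ Subgroup.center H) (hcard : Nat.card π.ker = p)
    (hsplit : ∃ s : G →* (extensionPullback ι π), ∀ g : G, ((s g : G × H).1) = g) :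
    IsProPCompletion p (extensionPullback ι π) H
      ((MonoidHom.snd G H).comp (extensionPullback ι π).subtype) := by
  obtain ⟨s, hs⟩ := hsplit
  have hs : (extensionPullback.fst ι π).comp s = .id G := MonoidHom.ext hs
  have := hH.topGroup; have := hH.compact; have := hH.t2
  have hp : p.Prime := Fact.out
  have hπt := extensionPullback.comp_snd_comp_eq hs
  set C := ((extensionPullback.snd ι π).comp s).range.topologicalClosure
  have hsup : C ⊔ π.ker = ⊤ := hK.topologicalClosure_range_sup_ker_eq_top hπcont hπt
  have := Subgroup.normal_of_sup_eq_top_of_le_center hsup hcentral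
  have hcompl : π.ker.IsComplement' C := Subgroup.isComplement'_of_disjoint_of_sup_eq_top
    (hK.disjoint_topologicalClosure_range_ker hH hπcont hp hcard hπt).symm (sup_comm C _ ▸ hsup)
  have : C.FiniteIndex := ⟨by rw [hcompl.index_eq_card, hcard]; exact hp.ne_zero⟩
  have hCopen := C.isOpen_of_isClosed_of_finiteIndex (Subgroup.isClosed_topologicalClosure _)
  have : Finite π.ker := Nat.finite_of_card_ne_zero (hcard ▸ hp.ne_zero)
  exact IsProPCompletion.of_denseRange hH (extensionPullback.denseRange_snd hsup)
    fun F _ _ _ _ hF f =>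
      hK.exists_continuous_comp_snd_eq hπcont hcentral hs (hcompl.continuous_projection hCopen)
        (fun g => hcompl.projection_eq_one (Subgroup.le_topologicalClosure _ ⟨g, rfl⟩))
        hcompl.projection_coe hF f

/-- Let `1 → ℤ/p → H → Ĝ₍ₚ₎ → 1` be a central extension of the pro-`p`
completion of a discrete group `G` by `ℤ/p`, and let `P` be its pull-back along
`ι : G → Ĝ₍ₚ₎`. If the pull-back extension of `G` splits, then `H`, via the (second)
projection `P → H`, is the pro-`p` completion of `P`; in particular `H` is isomorphic
as a topological group over `Ĝ₍ₚ₎` to the pro-`p` completion of `P`. -/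
theorem proPCompletion_of_pullback (p : ℕ) [Fact p.Prime]
    (G : Type) [Group G] [TopologicalSpace G] [DiscreteTopology G]
    (K : Type) [Group K] [TopologicalSpace K]
    (ι : G →* K) (hK : IsProPCompletion p G K ι)
    (H : Type) [Group H] [TopologicalSpace H] (hH : IsProPGroup p H)
    (π : H →* K) (hπcont : Continuous π) (hπsurj : Function.Surjective π)
    (hcentral : π.ker ≤ Subgroup.center H) (hcard : Nat.card π.ker = p)
    (hsplit : ∃ s : G →* (extensionPullback ι π), ∀ g : G, ((s g : G × H).1) = g) :
    IsProPCompletion p (extensionPullback ι π) H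
      ((MonoidHom.snd G H).comp (extensionPullback ι π).subtype) :=
  proPCompletion_of_pullback_general p G K ι hK H hH π hπcont hcentral hcard hsplit
end

section
/- Let Γ be a finite simplicial graph and A(Γ) the associated right-angled Artin group. For each vertex v, let f_v ∈ H^1(A(Γ); Q) = Hom(A(Γ), Q) be the homomorphism sending v to 1 and every other vertex generator to 0. Then for vertices v ≠ w, the cup product f_v ⌣ f_w ∈ H^2(A(Γ); Q) is nonzero if and only if v and w are adjacent in Γ. -/
open scoped commutatorElement

/-- The defining relations of the right-angled Artin group on a graph `Γ`:
commutators of generators spanning an edge. -/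
def raagRels {V : Type*} (Γ : SimpleGraph V) : Set (FreeGroup V) :=
  {r | ∃ v w : V, Γ.Adj v w ∧ r = ⁅FreeGroup.of v, FreeGroup.of w⁆}

/-- The right-angled Artin group `A(Γ)` of a graph `Γ`. -/
def RAAG {V : Type*} (Γ : SimpleGraph V) : Type _ := PresentedGroup (raagRels Γ)

instance {V : Type*} (Γ : SimpleGraph V) : Group (RAAG Γ) :=
  QuotientGroup.Quotient.group _

/-- The generator of `A(Γ)` corresponding to a vertex. -/
def RAAG.gen {V : Type*} (Γ : SimpleGraph V) (v : V) : RAAG Γ :=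
  PresentedGroup.of (rels := raagRels Γ) v

/-- The defining relations of the right-angled Coxeter group on a graph `Γ`:
edge commutators together with the squares of all generators. -/
def racgRels {V : Type*} (Γ : SimpleGraph V) : Set (FreeGroup V) :=
  raagRels Γ ∪ {r | ∃ v : V, r = (FreeGroup.of v) ^ 2}

/-- The right-angled Coxeter group `C(Γ)` of a graph `Γ`. -/
def RACG {V : Type*} (Γ : SimpleGraph V) : Type _ := PresentedGroup (racgRels Γ)

instance {V : Type*} (Γ : SimpleGraph V) : Group (RACG Γ) :=
  QuotientGroup.Quotient.group _

/-- The generator of `C(Γ)` corresponding to a vertex. -/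
def RACG.gen {V : Type*} (Γ : SimpleGraph V) (v : V) : RACG Γ :=
  PresentedGroup.of (rels := racgRels Γ) v
section GroupCohomologyLowDim

variable (k : Type*) [CommRing k] (G : Type*) [Group G]

/-- `H¹(G; k)` with trivial coefficients: additive homomorphisms `G → k`,
as a `k`-module. -/
def H1 : Submodule k (G → k) where
  carrier := {f | ∀ x y : G, f (x * y) = f x + f y}
  add_mem' := by
    intro f g hf hg x y
    simp only [Pi.add_apply, hf x y, hg x y]; ring
  zero_mem' := by intro x y; simp
  smul_mem' := by
    intro a f hf x y
    simp only [Pi.smul_apply, smul_eq_mul, hf x y]; ring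

variable {k G} in
/-- The (inhomogeneous) 2-cocycle condition for trivial coefficients. -/
def IsTwoCocycle (c : G → G → k) : Prop :=
  ∀ x y z : G, c y z - c (x * y) z + c x (y * z) - c x y = 0

variable {k G} in
/-- The (inhomogeneous) 2-coboundary condition for trivial coefficients. -/
def IsTwoCoboundary (c : G → G → k) : Prop :=
  ∃ f : G → k, ∀ x y : G, c x y = f x - f (x * y) + f y

/-- The `k`-module of 2-cocycles on `G` with trivial coefficients. -/
def twoCocycles : Submodule k (G → G → k) where
  carrier := {c | IsTwoCocycle c}
  add_mem' := by
    intro c d hc hd x y z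
    have h1 := hc x y z
    have h2 := hd x y z
    simp only [Pi.add_apply]
    linear_combination h1 + h2
  zero_mem' := by intro x y z; simp
  smul_mem' := by
    intro a c hc x y z
    have h1 := hc x y z
    simp only [Pi.smul_apply, smul_eq_mul]
    linear_combination a * h1

/-- The 2-coboundaries, as a submodule of the 2-cocycles. -/
def twoCoboundariesIn : Submodule k (twoCocycles k G) where
  carrier := {c | IsTwoCoboundary (c : G → G → k)}
  add_mem' := by
    rintro c d ⟨f, hf⟩ ⟨g, hg⟩
    exact ⟨f + g, fun x y => by
      simp only [Submodule.coe_add, Pi.add_apply, hf x y, hg x y]; ring⟩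
  zero_mem' := ⟨0, fun x y => by simp⟩
  smul_mem' := by
    rintro a c ⟨f, hf⟩
    exact ⟨a • f, fun x y => by
      simp only [SetLike.val_smul, Pi.smul_apply, smul_eq_mul, hf x y]; ring⟩

/-- `H²(G; k)` with trivial coefficients: 2-cocycles modulo 2-coboundaries. -/
def H2 : Type _ := twoCocycles k G ⧸ twoCoboundariesIn k G

noncomputable instance : AddCommGroup (H2 k G) := by
  unfold H2; infer_instance

noncomputable instance : Module k (H2 k G) := by
  unfold H2; infer_instance

variable {k G} in
/-- The 2-cocycle `(x, y) ↦ f x * g y` given by two 1-cocycles. -/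
def cupCocycle (f g : H1 k G) : twoCocycles k G :=
  ⟨fun x y => f.1 x * g.1 y, by
    intro x y z
    have hf := f.2 x y
    have hg := g.2 y z
    simp only [Set.mem_setOf_eq] at hf hg ⊢
    linear_combination (f.1 x : k) * hg - (g.1 z : k) * hf⟩

/-- The cup product `H¹(G;k) × H¹(G;k) → H²(G;k)` as a `k`-bilinear map. -/
noncomputable def cup : H1 k G →ₗ[k] H1 k G →ₗ[k] H2 k G :=
  LinearMap.mk₂ k (fun f g => Submodule.Quotient.mk (cupCocycle f g))
    (by
      intro f f' g
      have h : cupCocycle (f + f') g = cupCocycle f g + cupCocycle f' g := by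
        apply Subtype.ext; funext x y; simp [cupCocycle]; ring
      show Submodule.Quotient.mk (cupCocycle (f + f') g) = _
      rw [h, Submodule.Quotient.mk_add]; rfl)
    (by
      intro a f g
      have h : cupCocycle (a • f) g = a • cupCocycle f g := by
        apply Subtype.ext; funext x y; simp [cupCocycle]; ring
      show Submodule.Quotient.mk (cupCocycle (a • f) g) = _
      rw [h, Submodule.Quotient.mk_smul]; rfl)
    (by
      intro f g g'
      have h : cupCocycle f (g + g') = cupCocycle f g + cupCocycle f g' := by
        apply Subtype.ext; funext x y; simp [cupCocycle]; ring
      show Submodule.Quotient.mk (cupCocycle f (g + g')) = _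
      rw [h, Submodule.Quotient.mk_add]; rfl)
    (by
      intro a f g
      have h : cupCocycle f (a • g) = a • cupCocycle f g := by
        apply Subtype.ext; funext x y; simp [cupCocycle]; ring
      show Submodule.Quotient.mk (cupCocycle f (a • g)) = _
      rw [h, Submodule.Quotient.mk_smul]; rfl)

variable {k G}

variable {G' : Type*} [Group G']

/-- The map on `H¹` induced by a group homomorphism. -/
def H1map (φ : G →* G') : H1 k G' →ₗ[k] H1 k G where
  toFun f := ⟨f.1 ∘ φ, by intro x y; simp only [Function.comp_apply, map_mul]; exact f.2 _ _⟩
  map_add' f g := rfl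
  map_smul' a f := rfl

/-- The pull-back of 2-cocycles along a group homomorphism. -/
def twoCocyclesMap (φ : G →* G') : twoCocycles k G' →ₗ[k] twoCocycles k G where
  toFun c := ⟨fun x y => c.1 (φ x) (φ y), by
    intro x y z
    have := c.2 (φ x) (φ y) (φ z)
    simp only [map_mul] at *
    exact this⟩
  map_add' c d := rfl
  map_smul' a c := rfl

/-- The map on `H²` induced by a group homomorphism. -/
noncomputable def H2map (φ : G →* G') : H2 k G' →ₗ[k] H2 k G :=
  Submodule.mapQ (twoCoboundariesIn k G') (twoCoboundariesIn k G) (twoCocyclesMap φ)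
    (by
      rintro c ⟨f, hf⟩
      exact ⟨f ∘ φ, fun x y => by
        simp only [Function.comp_apply, map_mul, twoCocyclesMap, LinearMap.coe_mk,
          AddHom.coe_mk]
        exact hf _ _⟩)

end GroupCohomologyLowDim
section DualClassesAndProjection

variable {V : Type*} [DecidableEq V] (Γ : SimpleGraph V) (k : Type*) [CommRing k]

/-- The homomorphism `A(Γ) → k` (written multiplicatively) dual to a vertex `v`,
sending `v ↦ 1` and all other generators to `0`. -/
def RAAG.dualHom (v : V) : RAAG Γ →* Multiplicative k :=
  PresentedGroup.toGroup
    (f := fun w => Multiplicative.ofAdd (if w = v then (1 : k) else 0))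
    (by
      rintro r ⟨a, b, hab, rfl⟩
      rw [map_commutatorElement]
      exact commutatorElement_eq_one_iff_commute.mpr (mul_comm _ _))

/-- The cohomology class `f_v ∈ H¹(A(Γ); k)` dual to the vertex `v`. -/
def RAAG.dual (v : V) : H1 k (RAAG Γ) :=
  ⟨fun g => Multiplicative.toAdd (RAAG.dualHom Γ k v g), by
    intro x y
    simp [map_mul]⟩

/-- The canonical surjection `A(Γ) → C(Γ)`. -/
def raagToRacg : RAAG Γ →* RACG Γ :=
  PresentedGroup.toGroup (f := fun v => RACG.gen Γ v) (by
    intro r hr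
    have h : FreeGroup.lift (fun v => RACG.gen Γ v) = PresentedGroup.mk (racgRels Γ) := by
      apply FreeGroup.ext_hom
      intro a
      simp only [FreeGroup.lift_apply_of]
      rfl
    rw [h]
    have hmem : r ∈ Subgroup.normalClosure (racgRels Γ) :=
      Subgroup.subset_normalClosure (Set.mem_union_left _ hr)
    exact (QuotientGroup.eq_one_iff r).mpr hmem)

end DualClassesAndProjection

/-!
If `v` and `w` span an edge, their generators commute, and a cobounding cochain `F` of
`f_v ⌣ f_w` would give `1 = f_v(v) f_w(w) - f_v(w) f_w(v) = F(vw) - F(wv) = 0`.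
If they do not, `(f_v, f_w)` lifts to a homomorphism into the Heisenberg group (the images of
generators spanning an edge commute there), and minus its central coordinate bounds the cup
product, since the central coordinate of a product is `c + c' + a b'`.
-/

/-- The Heisenberg group over `k`; `⟨a, b, c⟩` stands for the unitriangular matrix
`[[1, a, c], [0, 1, b], [0, 0, 1]]`. -/
@[ext] structure Heisenberg (k : Type*) where
  a : k
  b : k
  c : k

namespace Heisenberg

variable {k : Type*} [CommRing k]

instance : Mul (Heisenberg k) := ⟨fun x y => ⟨x.a + y.a, x.b + y.b, x.c + y.c + x.a * y.b⟩⟩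
instance : One (Heisenberg k) := ⟨⟨0, 0, 0⟩⟩
instance : Inv (Heisenberg k) := ⟨fun x => ⟨-x.a, -x.b, -x.c + x.a * x.b⟩⟩

@[simp] theorem mul_a (x y : Heisenberg k) : (x * y).a = x.a + y.a := rfl
@[simp] theorem mul_b (x y : Heisenberg k) : (x * y).b = x.b + y.b := rfl
@[simp] theorem mul_c (x y : Heisenberg k) : (x * y).c = x.c + y.c + x.a * y.b := rfl
@[simp] theorem one_a : (1 : Heisenberg k).a = 0 := rfl
@[simp] theorem one_b : (1 : Heisenberg k).b = 0 := rfl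
@[simp] theorem one_c : (1 : Heisenberg k).c = 0 := rfl
@[simp] theorem inv_a (x : Heisenberg k) : x⁻¹.a = -x.a := rfl
@[simp] theorem inv_b (x : Heisenberg k) : x⁻¹.b = -x.b := rfl
@[simp] theorem inv_c (x : Heisenberg k) : x⁻¹.c = -x.c + x.a * x.b := rfl

instance : Group (Heisenberg k) where
  mul_assoc x y z := by ext <;> simp <;> ring
  one_mul x := by ext <;> simp
  mul_one x := by ext <;> simp
  inv_mul_cancel x := by ext <;> simp

theorem commute_iff {x y : Heisenberg k} : Commute x y ↔ x.a * y.b = y.a * x.b := by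
  rw [Commute, SemiconjBy, Heisenberg.ext_iff]
  simp only [mul_a, mul_b, mul_c, add_comm x.a, add_comm x.b, true_and]
  constructor <;> intro h <;> linear_combination h

def aHom : Heisenberg k →* Multiplicative k where
  toFun x := Multiplicative.ofAdd x.a
  map_one' := rfl
  map_mul' _ _ := rfl

def bHom : Heisenberg k →* Multiplicative k where
  toFun x := Multiplicative.ofAdd x.b
  map_one' := rfl
  map_mul' _ _ := rfl

end Heisenberg

section CupProduct

variable {k : Type*} [CommRing k] {G : Type*} [Group G]

theorem cup_eq_zero_iff (f g : H1 k G) :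
    cup k G f g = 0 ↔ ∃ F : G → k, ∀ x y : G, f.1 x * g.1 y = F x - F (x * y) + F y :=
  Submodule.Quotient.mk_eq_zero _

theorem mul_eq_mul_of_cup_eq_zero {f g : H1 k G} (h : cup k G f g = 0) {x y : G}
    (hxy : Commute x y) : f.1 x * g.1 y = f.1 y * g.1 x := by
  obtain ⟨F, hF⟩ := (cup_eq_zero_iff f g).mp h
  rw [hF x y, hF y x, hxy.eq]
  ring

theorem cup_eq_zero_of_lift_heisenberg {f g : H1 k G} (φ : G →* Heisenberg k)
    (hf : ∀ x, (φ x).a = f.1 x) (hg : ∀ x, (φ x).b = g.1 x) : cup k G f g = 0 := by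
  refine (cup_eq_zero_iff f g).mpr ⟨fun x => -(φ x).c, fun x y => ?_⟩
  have hc : (φ (x * y)).c = (φ x).c + (φ y).c + (φ x).a * (φ y).b := by
    rw [map_mul, Heisenberg.mul_c]
  rw [← hf, ← hg]
  linear_combination -hc

end CupProduct

namespace RAAG

variable {V : Type*} {Γ : SimpleGraph V} {H : Type*} [Group H]

theorem commute_gen_of_adj {v w : V} (h : Γ.Adj v w) : Commute (gen Γ v) (gen Γ w) := by
  have hrel := PresentedGroup.one_of_mem (rels := raagRels Γ) ⟨v, w, h, rfl⟩
  rwa [map_commutatorElement, commutatorElement_eq_one_iff_commute] at hrel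

def lift (f : V → H) (hf : ∀ v w, Γ.Adj v w → Commute (f v) (f w)) : RAAG Γ →* H :=
  PresentedGroup.toGroup (rels := raagRels Γ) (f := f) (by
    rintro r ⟨v, w, h, rfl⟩
    rw [map_commutatorElement, commutatorElement_eq_one_iff_commute]
    simpa using hf v w h)

@[simp] theorem lift_gen (f : V → H) (hf : ∀ v w, Γ.Adj v w → Commute (f v) (f w)) (v : V) :
    lift f hf (gen Γ v) = f v :=
  PresentedGroup.toGroup.of _

theorem hom_ext {φ ψ : RAAG Γ →* H} (h : ∀ v, φ (gen Γ v) = ψ (gen Γ v)) : φ = ψ :=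
  PresentedGroup.ext h

variable [DecidableEq V] {k : Type*} [CommRing k]

theorem dualHom_gen (v u : V) :
    dualHom Γ k v (gen Γ u) = Multiplicative.ofAdd (if u = v then 1 else 0) :=
  PresentedGroup.toGroup.of _

theorem dual_gen (v u : V) : (dual Γ k v).1 (gen Γ u) = if u = v then 1 else 0 := by
  simp [dual, dualHom_gen]

def toHeisenberg {v w : V} (h : ¬ Γ.Adj v w) : RAAG Γ →* Heisenberg k :=
  lift (fun u => ⟨if u = v then 1 else 0, if u = w then 1 else 0, 0⟩) (by
    intro x y hxy
    rw [Heisenberg.commute_iff]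
    dsimp only
    split_ifs <;> subst_vars <;> simp_all [SimpleGraph.adj_comm])

theorem toHeisenberg_a {v w : V} (h : ¬ Γ.Adj v w) (g : RAAG Γ) :
    (toHeisenberg (k := k) h g).a = (dual Γ k v).1 g := by
  have hcomp : Heisenberg.aHom.comp (toHeisenberg h) = dualHom Γ k v :=
    hom_ext fun u => by simp [toHeisenberg, Heisenberg.aHom, dualHom_gen]
  exact congrArg Multiplicative.toAdd (DFunLike.congr_fun hcomp g)

theorem toHeisenberg_b {v w : V} (h : ¬ Γ.Adj v w) (g : RAAG Γ) :
    (toHeisenberg (k := k) h g).b = (dual Γ k w).1 g := by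
  have hcomp : Heisenberg.bHom.comp (toHeisenberg h) = dualHom Γ k w :=
    hom_ext fun u => by simp [toHeisenberg, Heisenberg.bHom, dualHom_gen]
  exact congrArg Multiplicative.toAdd (DFunLike.congr_fun hcomp g)

theorem cup_dual_eq_zero_of_not_adj {v w : V} (h : ¬ Γ.Adj v w) :
    cup k (RAAG Γ) (dual Γ k v) (dual Γ k w) = 0 :=
  cup_eq_zero_of_lift_heisenberg (toHeisenberg h) (toHeisenberg_a h) (toHeisenberg_b h)

theorem cup_dual_ne_zero_of_adj [Nontrivial k] {v w : V} (h : Γ.Adj v w) :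
    cup k (RAAG Γ) (dual Γ k v) (dual Γ k w) ≠ 0 := fun hcup => by
  have := mul_eq_mul_of_cup_eq_zero hcup (commute_gen_of_adj h)
  simp [dual_gen, h.ne, h.ne.symm] at this

end RAAG

theorem cup_dual_ne_zero_iff_adj_general {V : Type} [DecidableEq V]
    (Γ : SimpleGraph V) (v w : V) :
    cup ℚ (RAAG Γ) (RAAG.dual Γ ℚ v) (RAAG.dual Γ ℚ w) ≠ 0 ↔ Γ.Adj v w :=
  ⟨not_imp_comm.mp RAAG.cup_dual_eq_zero_of_not_adj, RAAG.cup_dual_ne_zero_of_adj⟩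

/-- For distinct vertices `v ≠ w` of a finite graph `Γ`, the cup product
`f_v ⌣ f_w ∈ H²(A(Γ); ℚ)` of the dual classes is nonzero iff `v` and `w` are adjacent. -/
theorem cup_dual_ne_zero_iff_adj {V : Type} [Fintype V] [DecidableEq V]
    (Γ : SimpleGraph V) (v w : V) (hvw : v ≠ w) :
    cup ℚ (RAAG Γ) (RAAG.dual Γ ℚ v) (RAAG.dual Γ ℚ w) ≠ 0 ↔ Γ.Adj v w :=
  cup_dual_ne_zero_iff_adj_general Γ v w
end

section
/- For a finite simplicial graph Γ, H^2(C(Γ); Z/2) ≅ H^2(A(Γ); Z/2) ⊕ (Z/2)^{|V(Γ)|}, where the second summand Σ is precisely the image of the squaring map a ↦ a ⌣ a on H^1(C(Γ); Z/2), and the projection onto the first summand is induced by the natural surjection A(Γ) → C(Γ). -/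
open scoped commutatorElement

/-!
Pulled back to the free group `F` on the vertices, a 2-cocycle `c` on a quotient `F/N` becomes
a coboundary `δf`, because central extensions of free groups split; normalising `f` to vanish on
the generators makes it unique. The values `f r - c 1 1` on relators `r` then record the class of
`c` (Hopf's formula), provided every homomorphism `F → k` kills the relators. With `k = ℤ/2` the
relators of `C(Γ)` are the edge commutators and the squares of generators, those of `A(Γ)` only
the commutators, and pulling back along `A(Γ) → C(Γ)` forgets the square values. So the kernel
consists of the classes with vanishing commutator values, each determined by its square values
`ε ∈ (ℤ/2)^V`; the cup square of the class `a` with `a v = ε v` has these values, since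
`a v ^ 2 = a v`. Any commutator values on `A(Γ)` come from a cocycle `B(x̄, ȳ)` on the mod-2
abelianisation of `C(Γ)`, where the bilinear form `B` orients the edges.
-/

namespace IsTwoCocycle

variable {k : Type*} [CommRing k] {G : Type*} [Group G] {c : G → G → k}

lemma apply_one_left (hc : IsTwoCocycle c) (y : G) : c 1 y = c 1 1 := by
  have h := hc 1 1 y
  rw [one_mul, one_mul] at h
  linear_combination h

lemma apply_one_right (hc : IsTwoCocycle c) (x : G) : c x 1 = c 1 1 := by
  have h := hc x 1 1
  rw [mul_one, mul_one] at h
  linear_combination -h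

end IsTwoCocycle

@[ext]
structure CocycleExtension {k : Type*} [CommRing k] {G : Type*} [Group G]
    (c : twoCocycles k G) where
  fst : k
  snd : G

namespace CocycleExtension

variable {k : Type*} [CommRing k] {G : Type*} [Group G] {c : twoCocycles k G}

instance : Mul (CocycleExtension c) :=
  ⟨fun p q => ⟨p.fst + q.fst + c.1 p.snd q.snd, p.snd * q.snd⟩⟩

instance : One (CocycleExtension c) := ⟨⟨-c.1 1 1, 1⟩⟩

instance : Inv (CocycleExtension c) :=
  ⟨fun p => ⟨-p.fst - c.1 p.snd⁻¹ p.snd - c.1 1 1, p.snd⁻¹⟩⟩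

@[simp] lemma fst_mul (p q : CocycleExtension c) :
    (p * q).fst = p.fst + q.fst + c.1 p.snd q.snd := rfl

@[simp] lemma snd_mul (p q : CocycleExtension c) : (p * q).snd = p.snd * q.snd := rfl

instance : Group (CocycleExtension c) := Group.ofLeftAxioms
  (fun p q r => by
    have h := c.2 p.snd q.snd r.snd
    ext
    · simp only [fst_mul, snd_mul]
      linear_combination -h
    · exact mul_assoc _ _ _)
  (fun p => by
    have h := IsTwoCocycle.apply_one_left c.2 p.snd
    ext
    · change -c.1 1 1 + p.fst + c.1 1 p.snd = p.fst
      linear_combination h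
    · exact one_mul p.snd)
  (fun p => by
    ext
    · change -p.fst - c.1 p.snd⁻¹ p.snd - c.1 1 1 + p.fst + c.1 p.snd⁻¹ p.snd = -c.1 1 1
      ring
    · exact inv_mul_cancel p.snd)

variable (c) in
def proj : CocycleExtension c →* G :=
  MonoidHom.mk' snd fun _ _ => rfl

end CocycleExtension

section RelatorValue

variable {k : Type*} [CommRing k] {G : Type*} [Group G] {V : Type*}

-- Over a free group the extension splits: lifting each generator `v` to `(0, p v)` gives a
-- primitive of `c ∘ (p × p)` which vanishes on the generators.
def primitive (p : FreeGroup V →* G) (c : twoCocycles k G) (x : FreeGroup V) : k :=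
  -(FreeGroup.lift (fun v => (⟨0, p (.of v)⟩ : CocycleExtension c)) x).fst

variable {p : FreeGroup V →* G} {c : twoCocycles k G}

lemma CocycleExtension.snd_lift (x : FreeGroup V) :
    (FreeGroup.lift (fun v => (⟨0, p (.of v)⟩ : CocycleExtension c)) x).snd = p x := by
  change ((CocycleExtension.proj c).comp (FreeGroup.lift _)) x = p x
  congr 1
  exact FreeGroup.ext_hom _ _ fun v => by simp [CocycleExtension.proj]

lemma primitive_mul (x y : FreeGroup V) :
    primitive p c (x * y) = primitive p c x + primitive p c y - c.1 (p x) (p y) := by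
  simp only [primitive, map_mul, CocycleExtension.fst_mul, CocycleExtension.snd_lift]
  ring

@[simp] lemma primitive_of (v : V) : primitive p c (.of v) = 0 := by
  simp [primitive]

lemma primitive_one : primitive p c 1 = c.1 1 1 := by
  have h := primitive_mul (p := p) (c := c) 1 1
  rw [one_mul, map_one] at h
  linear_combination -h

lemma eq_primitive {g : FreeGroup V → k} (hmul : ∀ x y, g (x * y) = g x + g y - c.1 (p x) (p y))
    (hof : ∀ v, g (.of v) = 0) : g = primitive p c := by
  let δ : FreeGroup V →* Multiplicative k :=
    MonoidHom.mk' (fun x => .ofAdd (g x - primitive p c x)) fun x y => by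
      rw [← ofAdd_add, hmul, primitive_mul]
      ring_nf
  have hδ : δ = 1 := FreeGroup.ext_hom _ _ fun v => by simp [δ, hof]
  funext x
  exact sub_eq_zero.mp (congrArg Multiplicative.toAdd (DFunLike.congr_fun hδ x))

variable (p) in
def relatorValue : twoCocycles k G →ₗ[k] FreeGroup V → k where
  toFun c x := primitive p c x - c.1 1 1
  map_add' c d := by
    have h : primitive p c + primitive p d = primitive p (c + d) :=
      eq_primitive
        (fun x y => by simp only [Pi.add_apply, primitive_mul, Submodule.coe_add]; ring)
        (by simp)
    funext x
    simp only [← h, Pi.add_apply, Submodule.coe_add]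
    ring
  map_smul' a c := by
    have h : a • primitive p c = primitive p (a • c) :=
      eq_primitive
        (fun x y => by
          simp only [Pi.smul_apply, primitive_mul, SetLike.val_smul, smul_eq_mul]
          ring)
        (by simp)
    funext x
    simp only [← h, Pi.smul_apply, SetLike.val_smul, smul_eq_mul, RingHom.id_apply]
    ring

lemma relatorValue_apply (x : FreeGroup V) :
    relatorValue p c x = primitive p c x - c.1 1 1 := rfl

@[simp] lemma relatorValue_one : relatorValue p c 1 = 0 := by
  rw [relatorValue_apply, primitive_one, sub_self]

lemma relatorValue_mul_of_right {y : FreeGroup V} (hy : p y = 1) (x : FreeGroup V) :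
    relatorValue p c (x * y) = relatorValue p c x + relatorValue p c y := by
  simp only [relatorValue_apply, primitive_mul, hy, IsTwoCocycle.apply_one_right c.2]
  ring

lemma relatorValue_mul_of_left {x : FreeGroup V} (hx : p x = 1) (y : FreeGroup V) :
    relatorValue p c (x * y) = relatorValue p c x + relatorValue p c y := by
  simp only [relatorValue_apply, primitive_mul, hx, IsTwoCocycle.apply_one_left c.2]
  ring

lemma relatorValue_inv {n : FreeGroup V} (hn : p n = 1) :
    relatorValue p c n⁻¹ = -relatorValue p c n := by
  have h := relatorValue_mul_of_right (c := c) hn n⁻¹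
  rw [inv_mul_cancel, relatorValue_one] at h
  linear_combination -h

lemma relatorValue_conj {n : FreeGroup V} (hn : p n = 1) (g : FreeGroup V) :
    relatorValue p c (g * n * g⁻¹) = relatorValue p c n := by
  have hconj : p (g * n * g⁻¹) = 1 := by simp [hn]
  have h := relatorValue_mul_of_left (c := c) hconj g
  rw [inv_mul_cancel_right, relatorValue_mul_of_right hn] at h
  linear_combination -h

lemma relatorValue_eq_zero_of_mem_normalClosure {S : Set (FreeGroup V)}
    (hS : ∀ r ∈ S, p r = 1) (h : ∀ r ∈ S, relatorValue p c r = 0) {n : FreeGroup V}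
    (hn : n ∈ Subgroup.normalClosure S) : relatorValue p c n = 0 := by
  let K : Subgroup (FreeGroup V) :=
    { carrier := {x | p x = 1 ∧ relatorValue p c x = 0}
      mul_mem' := fun {_ _} ⟨hx, hx'⟩ ⟨hy, hy'⟩ =>
        ⟨by simp [hx, hy], by rw [relatorValue_mul_of_right hy, hx', hy', add_zero]⟩
      one_mem' := ⟨map_one p, relatorValue_one⟩
      inv_mem' := fun {_} ⟨hx, hx'⟩ =>
        ⟨by simp [hx], by rw [relatorValue_inv hx, hx', neg_zero]⟩ }
  have : K.Normal :=
    ⟨fun n ⟨hn, hn'⟩ g => ⟨by simp [hn], by rw [relatorValue_conj hn, hn']⟩⟩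
  exact (Subgroup.normalClosure_le_normal (N := K) (fun r hr => ⟨hS r hr, h r hr⟩) hn).2

lemma relatorValue_twoCocyclesMap {G' : Type*} [Group G'] (φ : G →* G')
    (c : twoCocycles k G') :
    relatorValue p (twoCocyclesMap φ c) = relatorValue (φ.comp p) c := by
  have h : primitive (φ.comp p) c = primitive p (twoCocyclesMap φ c) :=
    eq_primitive (fun x y => primitive_mul x y) (fun v => primitive_of v)
  funext x
  simp only [relatorValue_apply, ← h]
  change _ - c.1 (φ 1) (φ 1) = _
  rw [map_one]

lemma isTwoCoboundary_of_relatorValue_eq_zero (hp : Function.Surjective p)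
    (h : ∀ n, p n = 1 → relatorValue p c n = 0) : IsTwoCoboundary c.1 := by
  have hfiber : ∀ x y, p x = p y → primitive p c x = primitive p c y := by
    intro x y hxy
    have hn : p (x⁻¹ * y) = 1 := by rw [map_mul, map_inv, hxy, inv_mul_cancel]
    have h' := relatorValue_mul_of_right (c := c) hn x
    rw [mul_inv_cancel_left, h _ hn, add_zero] at h'
    simpa [relatorValue_apply] using h'.symm
  refine ⟨fun u => primitive p c (Function.surjInv hp u), fun u v => ?_⟩
  have huv := hfiber (Function.surjInv hp (u * v))
    (Function.surjInv hp u * Function.surjInv hp v) (by simp [Function.surjInv_eq hp])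
  beta_reduce
  rw [huv, primitive_mul, Function.surjInv_eq hp, Function.surjInv_eq hp]
  ring

lemma exists_relatorValue_eq_of_isTwoCoboundary (hc : IsTwoCoboundary c.1) :
    ∃ φ : FreeGroup V →* Multiplicative k,
      ∀ n, p n = 1 → relatorValue p c n = (φ n).toAdd := by
  obtain ⟨g, hg⟩ := hc
  refine ⟨MonoidHom.mk' (fun x => .ofAdd (primitive p c x - g (p x))) fun x y => ?_,
    fun n hn => ?_⟩
  · rw [← ofAdd_add, primitive_mul, hg, map_mul]
    ring_nf
  · have h1 := hg 1 1
    rw [one_mul] at h1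
    simp only [MonoidHom.mk'_apply, toAdd_ofAdd, relatorValue_apply, hn, h1]
    ring

end RelatorValue

section Presentation

variable {k : Type*} [CommRing k] {G : Type*} [Group G] {V : Type*} {p : FreeGroup V →* G}
  {rels : Set (FreeGroup V)}

lemma map_eq_one_of_ker_eq_normalClosure (hker : p.ker = Subgroup.normalClosure rels)
    {r : FreeGroup V} (hr : r ∈ rels) : p r = 1 := by
  rw [← MonoidHom.mem_ker, hker]
  exact Subgroup.subset_normalClosure hr

lemma relatorValue_eq_zero_of_mem_twoCoboundariesIn (hker : p.ker = Subgroup.normalClosure rels)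
    (hrels : ∀ φ : FreeGroup V →* Multiplicative k, ∀ r ∈ rels, φ r = 1)
    {c : twoCocycles k G} (hc : c ∈ twoCoboundariesIn k G) {r : FreeGroup V} (hr : r ∈ rels) :
    relatorValue p c r = 0 := by
  obtain ⟨φ, hφ⟩ := exists_relatorValue_eq_of_isTwoCoboundary (p := p) hc
  rw [hφ r (map_eq_one_of_ker_eq_normalClosure hker hr), hrels φ r hr, toAdd_one]

lemma mem_twoCoboundariesIn_of_relatorValue_eq_zero (hp : Function.Surjective p)
    (hker : p.ker = Subgroup.normalClosure rels) {c : twoCocycles k G}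
    (h : ∀ r ∈ rels, relatorValue p c r = 0) : c ∈ twoCoboundariesIn k G := by
  refine isTwoCoboundary_of_relatorValue_eq_zero hp fun n hn => ?_
  rw [← MonoidHom.mem_ker, hker] at hn
  exact relatorValue_eq_zero_of_mem_normalClosure
    (fun _ => map_eq_one_of_ker_eq_normalClosure hker) h hn

noncomputable def relatorValues (hker : p.ker = Subgroup.normalClosure rels)
    (hrels : ∀ φ : FreeGroup V →* Multiplicative k, ∀ r ∈ rels, φ r = 1) :
    H2 k G →ₗ[k] rels → k :=
  (twoCoboundariesIn k G).liftQ (LinearMap.funLeft k k Subtype.val ∘ₗ relatorValue p)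
    fun _ hc => funext fun r => relatorValue_eq_zero_of_mem_twoCoboundariesIn hker hrels hc r.2

variable (hker : p.ker = Subgroup.normalClosure rels)
  (hrels : ∀ φ : FreeGroup V →* Multiplicative k, ∀ r ∈ rels, φ r = 1)

lemma relatorValues_injective (hp : Function.Surjective p) :
    Function.Injective (relatorValues hker hrels) := by
  refine (injective_iff_map_eq_zero _).mpr fun x hx => ?_
  obtain ⟨c, rfl⟩ := Submodule.Quotient.mk_surjective _ x
  exact (Submodule.Quotient.mk_eq_zero _).mpr
    (mem_twoCoboundariesIn_of_relatorValue_eq_zero hp hker fun r hr => congrFun hx ⟨r, hr⟩)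

end Presentation

section BilinCocycle

variable {k : Type*} [CommRing k] {G : Type*} [Group G]

def H1.toMonoidHom (a : H1 k G) : G →* Multiplicative k :=
  MonoidHom.mk' (fun g => .ofAdd (a.1 g)) fun x y => congrArg Multiplicative.ofAdd (a.2 x y)

def H1.ofMonoidHom (φ : G →* Multiplicative k) : H1 k G :=
  ⟨fun g => (φ g).toAdd, fun x y => by simp⟩

variable {M : Type*} [AddCommGroup M] [Module k M]

def bilinCocycle (α : G →* Multiplicative M) (B : LinearMap.BilinForm k M) : twoCocycles k G :=
  ⟨fun x y => B (α x).toAdd (α y).toAdd, fun x y z => by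
    simp only [map_mul, toAdd_mul, map_add, LinearMap.add_apply]
    ring⟩

lemma cupCocycle_self (a : H1 k G) :
    cupCocycle a a = bilinCocycle (H1.toMonoidHom a) (LinearMap.mul k k) :=
  rfl

variable {V : Type*} (p : FreeGroup V →* G) (α : G →* Multiplicative M)
  (B : LinearMap.BilinForm k M)

lemma relatorValue_bilinCocycle_commutator (x y : FreeGroup V) :
    relatorValue p (bilinCocycle α B) ⁅x, y⁆ =
      B (α (p y)).toAdd (α (p x)).toAdd - B (α (p x)).toAdd (α (p y)).toAdd := by
  have hcomm : α (p ⁅x, y⁆) = 1 := by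
    rw [map_commutatorElement, map_commutatorElement, commutatorElement_eq_one_iff_commute]
    exact Commute.all _ _
  have h := primitive_mul (p := p) (c := bilinCocycle α B) ⁅x, y⁆ (y * x)
  rw [commutatorElement_def, show x * y * x⁻¹ * y⁻¹ * (y * x) = x * y by group,
    ← commutatorElement_def, primitive_mul, primitive_mul] at h
  simp only [relatorValue_apply, bilinCocycle, hcomm, map_one, toAdd_one, map_zero,
    LinearMap.zero_apply] at h ⊢
  linear_combination -h

lemma relatorValue_bilinCocycle_of_sq (v : V) :
    relatorValue p (bilinCocycle α B) (.of v ^ 2) =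
      -B (α (p (.of v))).toAdd (α (p (.of v))).toAdd := by
  simp [relatorValue_apply, pow_two, primitive_mul, bilinCocycle]

end BilinCocycle

lemma Multiplicative.sq_eq_one_of_zmod_two {M : Type*} [AddCommGroup M] [Module (ZMod 2) M]
    (y : Multiplicative M) : y ^ 2 = 1 := by
  rw [← ofAdd_toAdd y, ← ofAdd_nsmul, ← Nat.cast_smul_eq_nsmul (ZMod 2), ZMod.natCast_self,
    zero_smul, ofAdd_zero]

section RightAngled

variable {V : Type*} (Γ : SimpleGraph V)

def RAAG.mk : FreeGroup V →* RAAG Γ := PresentedGroup.mk (raagRels Γ)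

def RACG.mk : FreeGroup V →* RACG Γ := PresentedGroup.mk (racgRels Γ)

lemma RAAG.mk_surjective : Function.Surjective (RAAG.mk Γ) := PresentedGroup.mk_surjective _

lemma RACG.mk_surjective : Function.Surjective (RACG.mk Γ) := PresentedGroup.mk_surjective _

lemma RAAG.ker_mk : (RAAG.mk Γ).ker = Subgroup.normalClosure (raagRels Γ) :=
  Subgroup.ext fun _ => PresentedGroup.mk_eq_one_iff

lemma RACG.ker_mk : (RACG.mk Γ).ker = Subgroup.normalClosure (racgRels Γ) :=
  Subgroup.ext fun _ => PresentedGroup.mk_eq_one_iff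

lemma raagRels_map_eq_one {k : Type*} [CommRing k] (φ : FreeGroup V →* Multiplicative k) :
    ∀ r ∈ raagRels Γ, φ r = 1 := by
  rintro r ⟨v, w, -, rfl⟩
  rw [map_commutatorElement, commutatorElement_eq_one_iff_commute]
  exact Commute.all _ _

lemma racgRels_map_eq_one (φ : FreeGroup V →* Multiplicative (ZMod 2)) :
    ∀ r ∈ racgRels Γ, φ r = 1 := by
  rintro r (hr | ⟨v, rfl⟩)
  · exact raagRels_map_eq_one Γ φ r hr
  · rw [map_pow, Multiplicative.sq_eq_one_of_zmod_two]

noncomputable abbrev RAAG.relatorValues :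
    H2 (ZMod 2) (RAAG Γ) →ₗ[ZMod 2] raagRels Γ → ZMod 2 :=
  _root_.relatorValues (RAAG.ker_mk Γ) (raagRels_map_eq_one Γ)

noncomputable abbrev RACG.relatorValues :
    H2 (ZMod 2) (RACG Γ) →ₗ[ZMod 2] racgRels Γ → ZMod 2 :=
  _root_.relatorValues (RACG.ker_mk Γ) (racgRels_map_eq_one Γ)

lemma RAAG.relatorValues_injective : Function.Injective (RAAG.relatorValues Γ) :=
  _root_.relatorValues_injective _ _ (RAAG.mk_surjective Γ)

lemma RACG.relatorValues_injective : Function.Injective (RACG.relatorValues Γ) :=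
  _root_.relatorValues_injective _ _ (RACG.mk_surjective Γ)

def RACG.lift {H : Type*} [CommGroup H] (f : V → H) (hf : ∀ v, f v ^ 2 = 1) : RACG Γ →* H :=
  PresentedGroup.toGroup (f := f) <| by
    rintro r (⟨v, w, -, rfl⟩ | ⟨v, rfl⟩)
    · rw [map_commutatorElement, commutatorElement_eq_one_iff_commute]
      exact Commute.all _ _
    · rw [map_pow, FreeGroup.lift_apply_of, hf]

@[simp] lemma RACG.lift_mk_of {H : Type*} [CommGroup H] (f : V → H) (hf : ∀ v, f v ^ 2 = 1)
    (v : V) : RACG.lift Γ f hf (RACG.mk Γ (.of v)) = f v :=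
  PresentedGroup.toGroup.of _

def RACG.h1OfValues (ε : V → ZMod 2) : H1 (ZMod 2) (RACG Γ) :=
  H1.ofMonoidHom <|
    RACG.lift Γ (fun v => .ofAdd (ε v)) fun _ => Multiplicative.sq_eq_one_of_zmod_two _

@[simp] lemma RACG.h1OfValues_mk_of (ε : V → ZMod 2) (v : V) :
    (RACG.h1OfValues Γ ε).1 (RACG.mk Γ (.of v)) = ε v := by
  simp [RACG.h1OfValues, H1.ofMonoidHom]

lemma raagToRacg_comp_mk : (raagToRacg Γ).comp (RAAG.mk Γ) = RACG.mk Γ :=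
  FreeGroup.ext_hom _ _ fun v => by
    change raagToRacg Γ (PresentedGroup.of v) = RACG.gen Γ v
    exact PresentedGroup.toGroup.of _

lemma relatorValues_H2map_raagToRacg (x : H2 (ZMod 2) (RACG Γ)) (r : raagRels Γ) :
    RAAG.relatorValues Γ (H2map (raagToRacg Γ) x) r =
      RACG.relatorValues Γ x ⟨r, Or.inl r.2⟩ := by
  obtain ⟨c, rfl⟩ := Submodule.Quotient.mk_surjective _ x
  change relatorValue _ (twoCocyclesMap (raagToRacg Γ) c) r.1 = _
  rw [relatorValue_twoCocyclesMap, raagToRacg_comp_mk]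
  rfl

lemma RACG.mem_ker_H2map_iff (x : H2 (ZMod 2) (RACG Γ)) :
    x ∈ LinearMap.ker (H2map (raagToRacg Γ)) ↔ ∀ v w (h : Γ.Adj v w),
      RACG.relatorValues Γ x
        ⟨⁅FreeGroup.of v, FreeGroup.of w⁆, Or.inl ⟨v, w, h, rfl⟩⟩ = 0 := by
  rw [LinearMap.mem_ker, ← (RAAG.relatorValues_injective Γ).eq_iff, map_zero]
  constructor
  · intro h v w hvw
    exact (relatorValues_H2map_raagToRacg Γ x ⟨_, v, w, hvw, rfl⟩).symm.trans (congrFun h _)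
  · intro h
    ext ⟨_, v, w, hvw, rfl⟩
    exact (relatorValues_H2map_raagToRacg Γ x _).trans (h v w hvw)

lemma RACG.cup_self_mem_ker (a : H1 (ZMod 2) (RACG Γ)) :
    cup (ZMod 2) (RACG Γ) a a ∈ LinearMap.ker (H2map (raagToRacg Γ)) := by
  refine (RACG.mem_ker_H2map_iff Γ _).mpr fun v w _ => ?_
  change relatorValue _ (cupCocycle a a) _ = 0
  rw [cupCocycle_self, relatorValue_bilinCocycle_commutator]
  exact sub_eq_zero.mpr (mul_comm _ _)

noncomputable def RACG.squareValues : H2 (ZMod 2) (RACG Γ) →ₗ[ZMod 2] V → ZMod 2 :=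
  LinearMap.funLeft (ZMod 2) (ZMod 2) (fun v => ⟨.of v ^ 2, Or.inr ⟨v, rfl⟩⟩) ∘ₗ
    RACG.relatorValues Γ

lemma RACG.squareValues_cup_self (a : H1 (ZMod 2) (RACG Γ)) :
    RACG.squareValues Γ (cup (ZMod 2) (RACG Γ) a a) = fun v => a.1 (RACG.mk Γ (.of v)) := by
  funext v
  change relatorValue (RACG.mk Γ) (cupCocycle a a) (.of v ^ 2) = _
  rw [cupCocycle_self, relatorValue_bilinCocycle_of_sq, LinearMap.mul_apply',
    ZMod.neg_eq_self_mod_two, ← pow_two, ZMod.pow_card]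
  rfl

lemma RACG.eq_zero_of_mem_ker_of_squareValues_eq_zero {x : H2 (ZMod 2) (RACG Γ)}
    (hx : x ∈ LinearMap.ker (H2map (raagToRacg Γ))) (hsq : RACG.squareValues Γ x = 0) :
    x = 0 := by
  apply RACG.relatorValues_injective Γ
  rw [map_zero]
  ext ⟨_, ⟨v, w, hvw, rfl⟩ | ⟨v, rfl⟩⟩
  · exact (RACG.mem_ker_H2map_iff Γ x).mp hx v w hvw
  · exact congrFun hsq v

lemma RACG.squareValues_domRestrict_bijective :
    Function.Bijective
      ((RACG.squareValues Γ).domRestrict (LinearMap.ker (H2map (raagToRacg Γ)))) := by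
  refine ⟨(injective_iff_map_eq_zero _).mpr fun x hx => ?_, fun ε => ?_⟩
  · exact Subtype.ext (RACG.eq_zero_of_mem_ker_of_squareValues_eq_zero Γ x.2 hx)
  · refine ⟨⟨_, RACG.cup_self_mem_ker Γ (RACG.h1OfValues Γ ε)⟩, ?_⟩
    simp [RACG.squareValues_cup_self]

lemma RACG.exists_cup_self_eq_of_mem_ker {x : H2 (ZMod 2) (RACG Γ)}
    (hx : x ∈ LinearMap.ker (H2map (raagToRacg Γ))) :
    ∃ a : H1 (ZMod 2) (RACG Γ), cup (ZMod 2) (RACG Γ) a a = x := by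
  let a := RACG.h1OfValues Γ (RACG.squareValues Γ x)
  have h := (RACG.squareValues_domRestrict_bijective Γ).1
    (a₁ := ⟨cup (ZMod 2) (RACG Γ) a a, RACG.cup_self_mem_ker Γ a⟩) (a₂ := ⟨x, hx⟩)
    (by simp [a, RACG.squareValues_cup_self])
  exact ⟨a, congrArg Subtype.val h⟩

lemma RAAG.relatorValue_commutator_comm (d : twoCocycles (ZMod 2) (RAAG Γ)) {v w : V}
    (h : Γ.Adj v w) :
    relatorValue (RAAG.mk Γ) d ⁅FreeGroup.of w, FreeGroup.of v⁆ =
      relatorValue (RAAG.mk Γ) d ⁅FreeGroup.of v, FreeGroup.of w⁆ := by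
  have hvw : RAAG.mk Γ ⁅FreeGroup.of v, FreeGroup.of w⁆ = 1 :=
    PresentedGroup.one_of_mem ⟨v, w, h, rfl⟩
  rw [← commutatorElement_inv, relatorValue_inv hvw, ZMod.neg_eq_self_mod_two]

lemma H2map_raagToRacg_surjective [Finite V] :
    Function.Surjective (H2map (k := ZMod 2) (raagToRacg Γ)) := by
  classical
  have := Fintype.ofFinite V
  intro y
  obtain ⟨d, rfl⟩ := Submodule.Quotient.mk_surjective _ y
  let μ := relatorValue (RAAG.mk Γ) d
  -- Orienting the edges by a well-order makes `ν w v - ν v w = μ ⁅v, w⁆` on every edge.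
  let ν : Matrix V V (ZMod 2) := .of fun s t =>
    if WellOrderingRel s t then μ ⁅FreeGroup.of s, FreeGroup.of t⁆ else 0
  let α : RACG Γ →* Multiplicative (V → ZMod 2) :=
    RACG.lift Γ (fun v => .ofAdd (Pi.single v 1)) fun _ => Multiplicative.sq_eq_one_of_zmod_two _
  refine ⟨(Submodule.Quotient.mk (bilinCocycle α (Matrix.toBilin' ν)) : H2 (ZMod 2) (RACG Γ)),
    RAAG.relatorValues_injective Γ ?_⟩
  ext ⟨_, v, w, hvw, rfl⟩
  refine (relatorValues_H2map_raagToRacg Γ _ _).trans ?_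
  change relatorValue (RACG.mk Γ) (bilinCocycle α (Matrix.toBilin' ν)) _ = μ _
  rw [relatorValue_bilinCocycle_commutator]
  simp only [α, RACG.lift_mk_of, toAdd_ofAdd, Matrix.toBilin'_single, ν, Matrix.of_apply]
  rcases trichotomous_of WellOrderingRel v w with hvw' | rfl | hwv
  · simp [hvw', asymm hvw', ZMod.neg_eq_self_mod_two]
  · exact absurd hvw (Γ.irrefl)
  · simpa [hwv, asymm hwv] using RAAG.relatorValue_commutator_comm Γ d hvw

end RightAngled

theorem h2_racg_decomposition_general {V : Type} [Fintype V] (Γ : SimpleGraph V) :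
    Function.Surjective (H2map (k := ZMod 2) (raagToRacg Γ)) ∧
    (LinearMap.ker (H2map (k := ZMod 2) (raagToRacg Γ)) : Set (H2 (ZMod 2) (RACG Γ))) =
      Set.range (fun a : H1 (ZMod 2) (RACG Γ) => cup (ZMod 2) (RACG Γ) a a) ∧
    Module.finrank (ZMod 2) (LinearMap.ker (H2map (k := ZMod 2) (raagToRacg Γ))) =
      Fintype.card V := by
  refine ⟨H2map_raagToRacg_surjective Γ, Set.ext fun x => ⟨fun hx => ?_, ?_⟩, ?_⟩
  · exact RACG.exists_cup_self_eq_of_mem_ker Γ hx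
  · rintro ⟨a, rfl⟩
    exact RACG.cup_self_mem_ker Γ a
  · rw [(LinearEquiv.ofBijective _ (RACG.squareValues_domRestrict_bijective Γ)).finrank_eq,
      Module.finrank_fintype_fun_eq_card]

/-- `H²(C(Γ); ℤ/2) ≅ H²(A(Γ); ℤ/2) ⊕ (ℤ/2)^{|V(Γ)|}`: the map
`H²(C(Γ); ℤ/2) → H²(A(Γ); ℤ/2)` induced by the natural surjection `A(Γ) → C(Γ)` is
surjective, its kernel `Σ` is precisely the image of the squaring map `a ↦ a ⌣ a`
on `H¹(C(Γ); ℤ/2)`, and `Σ ≅ (ℤ/2)^{|V(Γ)|}`. -/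
theorem h2_racg_decomposition {V : Type} [Fintype V] [DecidableEq V] (Γ : SimpleGraph V) :
    Function.Surjective (H2map (k := ZMod 2) (raagToRacg Γ)) ∧
    (LinearMap.ker (H2map (k := ZMod 2) (raagToRacg Γ)) : Set (H2 (ZMod 2) (RACG Γ))) =
      Set.range (fun a : H1 (ZMod 2) (RACG Γ) => cup (ZMod 2) (RACG Γ) a a) ∧
    Module.finrank (ZMod 2) (LinearMap.ker (H2map (k := ZMod 2) (raagToRacg Γ))) =
      Fintype.card V :=
  h2_racg_decomposition_general Γ
end

section
/- Let Γ be a finite graph, w a vertex of Γ, and let w*: C(Γ) → Z/2 be the homomorphism sending w to 1 and all other generators to 0. Then the group P presented by ⟨V(Γ) | [u,v]=1 for edges (u,v), v²=1 for v ≠ w, w⁴=1, w² central⟩ is a central extension of C(Γ) by Z/2 (kernel generated by w²); moreover the homomorphism P → Z/4 killing all generators except w (and sending w to 1) restricts injectively to this central Z/2, so the kernel Z/2 injects into the pro-2 completion of P. -/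
open scoped commutatorElement

/-- The relations of the extension group `P`: edge commutators, `v² = 1` for `v ≠ w`,
`w⁴ = 1`, and `w²` central (it commutes with every generator). -/
def pExtRels {V : Type} (Γ : SimpleGraph V) (w : V) : Set (FreeGroup V) :=
  raagRels Γ ∪ {r | ∃ v : V, v ≠ w ∧ r = (FreeGroup.of v) ^ 2}
    ∪ {(FreeGroup.of w) ^ 4}
    ∪ {r | ∃ u : V, r = ⁅(FreeGroup.of w) ^ 2, FreeGroup.of u⁆}

/-- The group `P = ⟨V(Γ) | [u,v]=1 for edges, v²=1 for v ≠ w, w⁴=1, w² central⟩`. -/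
def PExt {V : Type} (Γ : SimpleGraph V) (w : V) : Type := PresentedGroup (pExtRels Γ w)

instance {V : Type} (Γ : SimpleGraph V) (w : V) : Group (PExt Γ w) :=
  QuotientGroup.Quotient.group _

/-!
Sending every generator to the generator of the same name gives `π : P → C(Γ)`, and the
relations of `C(Γ)` hold in `P` modulo `⟨w²⟩`, so `ker π` is generated by the central element
`w²`, whose square is `w⁴ = 1`. The character `χ : P → ℤ/4` with `χ(w) = 1` sends `w²` to
`2 ≠ 0`; hence `w² ≠ 1`, the kernel has order `2`, and `χ` is injective on it. As `ℤ/4` is a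
finite `2`-group, `χ` factors through the pro-`2` completion, which is therefore injective on
the kernel as well.
-/

theorem Subgroup.normal_of_le_center {G : Type*} [Group G] {H : Subgroup G}
    (h : H ≤ Subgroup.center G) : H.Normal :=
  ⟨fun n hn g => by rwa [Subgroup.mem_center_iff.1 (h hn) g, mul_inv_cancel_right]⟩

theorem MonoidHom.ker_eq_of_comp_eq_mk' {G H : Type*} [Group G] [Group H] (f : G →* H)
    {N : Subgroup G} [N.Normal] (hN : N ≤ f.ker) (g : H →* G ⧸ N)
    (hg : g.comp f = QuotientGroup.mk' N) : f.ker = N := by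
  refine le_antisymm (fun x hx => ?_) hN
  rw [← QuotientGroup.ker_mk' N, ← hg, MonoidHom.mem_ker, MonoidHom.comp_apply,
    f.mem_ker.1 hx, map_one]

theorem eq_one_or_eq_of_mem_zpowers {G : Type*} [Group G] {a x : G} (ha : a ^ 2 = 1)
    (hx : x ∈ Subgroup.zpowers a) : x = 1 ∨ x = a := by
  obtain ⟨n, rfl⟩ := Subgroup.mem_zpowers_iff.1 hx
  have ha' : a ^ (2 : ℤ) = 1 := by exact_mod_cast ha
  rcases Int.even_or_odd' n with ⟨k, rfl | rfl⟩
  · left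
    rw [zpow_mul, ha', one_zpow]
  · right
    rw [zpow_add, zpow_mul, ha', one_zpow, one_mul, zpow_one]

theorem injOn_zpowers_of_sq_eq_one {G M : Type*} [Group G] [Monoid M] (f : G →* M) {a : G}
    (ha : a ^ 2 = 1) (hfa : f a ≠ 1) : Set.InjOn f (Subgroup.zpowers a) := by
  intro x hx y hy hxy
  rcases eq_one_or_eq_of_mem_zpowers ha hx with rfl | rfl <;>
    rcases eq_one_or_eq_of_mem_zpowers ha hy with rfl | rfl
  · rfl
  · exact absurd (hxy.symm.trans (map_one f)) hfa
  · exact absurd (hxy.trans (map_one f)) hfa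
  · rfl

theorem IsProPCompletion.injOn_of_injOn {p : ℕ} {G K F : Type} [Group G] [Group K]
    [TopologicalSpace K] {ι : G →* K} (hι : IsProPCompletion p G K ι) [Group F] [Finite F]
    (hF : IsPGroup p F) (f : G →* F) {s : Set G} (hf : Set.InjOn f s) : Set.InjOn ι s := by
  let _ : TopologicalSpace F := ⊥
  have : DiscreteTopology F := ⟨rfl⟩
  obtain ⟨φ, ⟨-, hφ⟩, -⟩ := hι.universal F hF f
  exact Set.InjOn.of_comp (g := φ) (by rwa [← MonoidHom.coe_comp, hφ])

theorem isPGroup_multiplicative_zmod_pow (p n : ℕ) : IsPGroup p (Multiplicative (ZMod (p ^ n))) :=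
  IsPGroup.of_card (n := n) (by rw [Nat.card_congr Multiplicative.toAdd, Nat.card_zmod])

namespace RACG

variable {V : Type*} (Γ : SimpleGraph V)

theorem gen_sq (v : V) : RACG.gen Γ v ^ 2 = 1 :=
  (map_pow _ _ 2).symm.trans (PresentedGroup.one_of_mem (Or.inr ⟨v, rfl⟩))

theorem commutator_gen_eq_one {u v : V} (h : Γ.Adj u v) : ⁅RACG.gen Γ u, RACG.gen Γ v⁆ = 1 :=
  (map_commutatorElement _ _ _).symm.trans (PresentedGroup.one_of_mem (Or.inl ⟨u, v, h, rfl⟩))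

end RACG

namespace PExt

variable {V : Type} (Γ : SimpleGraph V) (w : V)

/-- `PresentedGroup.of`, typed in `PExt Γ w` so that products and powers use its group structure
syntactically. -/
def of (u : V) : PExt Γ w := PresentedGroup.of u

theorem commutator_of_eq_one {u v : V} (h : Γ.Adj u v) : ⁅of Γ w u, of Γ w v⁆ = 1 :=
  (map_commutatorElement _ _ _).symm.trans
    (PresentedGroup.one_of_mem (Or.inl (Or.inl (Or.inl ⟨u, v, h, rfl⟩))))

theorem of_sq_eq_one {v : V} (h : v ≠ w) : of Γ w v ^ 2 = 1 :=
  (map_pow _ _ 2).symm.trans (PresentedGroup.one_of_mem (Or.inl (Or.inl (Or.inr ⟨v, h, rfl⟩))))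

theorem of_pow_four : of Γ w w ^ 4 = 1 :=
  (map_pow _ _ 4).symm.trans (PresentedGroup.one_of_mem (Or.inl (Or.inr rfl)))

theorem of_sq_sq : (of Γ w w ^ 2) ^ 2 = 1 := by
  rw [← pow_mul]
  exact of_pow_four Γ w

theorem commutator_of_sq_eq_one (u : V) : ⁅of Γ w w ^ 2, of Γ w u⁆ = 1 :=
  (congrArg₂ _ (map_pow _ _ 2) rfl).symm.trans ((map_commutatorElement _ _ _).symm.trans
    (PresentedGroup.one_of_mem (Or.inr ⟨u, rfl⟩)))

theorem of_sq_mem_center : of Γ w w ^ 2 ∈ Subgroup.center (PExt Γ w) := by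
  refine Subgroup.mem_center_iff.2 fun g => ?_
  have hg : g ∈ Subgroup.centralizer {of Γ w w ^ 2} := by
    refine PresentedGroup.generated_by _ _ (fun u => ?_) g
    rintro _ rfl
    exact commutatorElement_eq_one_iff_mul_comm.1 (commutator_of_sq_eq_one Γ w u)
  exact (Subgroup.mem_centralizer_iff.1 hg _ rfl).symm

theorem toRACG_rels : ∀ r ∈ pExtRels Γ w, FreeGroup.lift (RACG.gen Γ) r = 1 := by
  rintro r (((⟨u, v, huv, rfl⟩ | ⟨v, -, rfl⟩) | rfl) | ⟨u, rfl⟩)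
  · simpa only [map_commutatorElement, FreeGroup.lift_apply_of]
      using RACG.commutator_gen_eq_one Γ huv
  · simpa only [map_pow, FreeGroup.lift_apply_of] using RACG.gen_sq Γ v
  · rw [map_pow, FreeGroup.lift_apply_of, show 4 = 2 * 2 from rfl, pow_mul, RACG.gen_sq, one_pow]
  · simp only [map_commutatorElement, map_pow, FreeGroup.lift_apply_of, RACG.gen_sq,
      commutatorElement_one_left]

def toRACG : PExt Γ w →* RACG Γ :=
  PresentedGroup.toGroup (toRACG_rels Γ w)

theorem toRACG_of (u : V) : toRACG Γ w (of Γ w u) = RACG.gen Γ u :=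
  PresentedGroup.toGroup.of _

theorem toRACG_surjective : Function.Surjective (toRACG Γ w) := fun x =>
  PresentedGroup.generated_by (racgRels Γ) (toRACG Γ w).range
    (fun u => ⟨of Γ w u, toRACG_of Γ w u⟩) x

open Classical in
theorem toZMod4_rels : ∀ r ∈ pExtRels Γ w,
    FreeGroup.lift (fun u => if u = w then Multiplicative.ofAdd (1 : ZMod 4) else 1) r = 1 := by
  rintro r (((⟨u, v, -, rfl⟩ | ⟨v, hv, rfl⟩) | rfl) | ⟨u, rfl⟩)
  · rw [map_commutatorElement, commutatorElement_eq_one_iff_mul_comm, mul_comm]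
  · rw [map_pow, FreeGroup.lift_apply_of, if_neg hv, one_pow]
  · rw [map_pow, FreeGroup.lift_apply_of, if_pos rfl]
    rfl
  · rw [map_commutatorElement, commutatorElement_eq_one_iff_mul_comm, mul_comm]

open Classical in
noncomputable def toZMod4 : PExt Γ w →* Multiplicative (ZMod 4) :=
  PresentedGroup.toGroup (toZMod4_rels Γ w)

theorem toZMod4_of_self : toZMod4 Γ w (of Γ w w) = Multiplicative.ofAdd (1 : ZMod 4) :=
  (PresentedGroup.toGroup.of _).trans (if_pos rfl)

theorem toZMod4_of_of_ne {u : V} (hu : u ≠ w) : toZMod4 Γ w (of Γ w u) = 1 :=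
  (PresentedGroup.toGroup.of _).trans (if_neg hu)

theorem toZMod4_of_sq_ne_one : toZMod4 Γ w (of Γ w w ^ 2) ≠ 1 := by
  rw [map_pow, toZMod4_of_self]
  decide

def zpowersOfSq : Subgroup (PExt Γ w) := Subgroup.zpowers (of Γ w w ^ 2)

theorem zpowersOfSq_le_center : zpowersOfSq Γ w ≤ Subgroup.center (PExt Γ w) :=
  Subgroup.zpowers_le.2 (of_sq_mem_center Γ w)

instance : (zpowersOfSq Γ w).Normal :=
  Subgroup.normal_of_le_center (zpowersOfSq_le_center Γ w)

theorem mk_of_rels : ∀ r ∈ racgRels Γ,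
    FreeGroup.lift (fun u => QuotientGroup.mk' (zpowersOfSq Γ w) (of Γ w u)) r = 1 := by
  rintro r (⟨u, v, huv, rfl⟩ | ⟨v, rfl⟩)
  · rw [map_commutatorElement, FreeGroup.lift_apply_of, FreeGroup.lift_apply_of,
      ← map_commutatorElement, commutator_of_eq_one Γ w huv, map_one]
  · rw [map_pow, FreeGroup.lift_apply_of, ← map_pow, QuotientGroup.mk'_apply,
      QuotientGroup.eq_one_iff]
    by_cases hv : v = w
    · exact hv ▸ Subgroup.mem_zpowers _
    · exact (of_sq_eq_one Γ w hv).symm ▸ one_mem _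

theorem ker_toRACG : (toRACG Γ w).ker = zpowersOfSq Γ w := by
  refine (toRACG Γ w).ker_eq_of_comp_eq_mk' (N := zpowersOfSq Γ w) ?_
    (PresentedGroup.toGroup (mk_of_rels Γ w)) (PresentedGroup.ext fun u => ?_)
  · rw [zpowersOfSq, Subgroup.zpowers_le, MonoidHom.mem_ker, map_pow, toRACG_of, RACG.gen_sq]
  · exact (congrArg _ (toRACG_of Γ w u)).trans (PresentedGroup.toGroup.of (mk_of_rels Γ w))

end PExt

theorem pExt_central_extension_general {V : Type} (Γ : SimpleGraph V) (w : V) :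
    ∃ π : PExt Γ w →* RACG Γ,
      (∀ u : V, π (PresentedGroup.of u) = RACG.gen Γ u) ∧
      Function.Surjective π ∧
      π.ker = Subgroup.closure {(PresentedGroup.of w : PExt Γ w) ^ 2} ∧
      π.ker ≤ Subgroup.center (PExt Γ w) ∧
      Nat.card π.ker = 2 ∧
      (∃ χ : PExt Γ w →* Multiplicative (ZMod 4),
        χ (PresentedGroup.of w) = Multiplicative.ofAdd (1 : ZMod 4) ∧
        (∀ u : V, u ≠ w → χ (PresentedGroup.of u) = 1) ∧
        Set.InjOn χ (π.ker : Set (PExt Γ w))) ∧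
      ∀ (K : Type) [Group K] [TopologicalSpace K] (ι : PExt Γ w →* K),
        IsProPCompletion 2 (PExt Γ w) K ι → Set.InjOn ι (π.ker : Set (PExt Γ w)) := by
  have hker := PExt.ker_toRACG Γ w
  have hsq := PExt.of_sq_sq Γ w
  have hχ := PExt.toZMod4_of_sq_ne_one Γ w
  have hinj : Set.InjOn (PExt.toZMod4 Γ w) (PExt.toRACG Γ w).ker :=
    hker ▸ injOn_zpowers_of_sq_eq_one _ hsq hχ
  refine ⟨PExt.toRACG Γ w, PExt.toRACG_of Γ w, PExt.toRACG_surjective Γ w,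
    hker.trans (Subgroup.zpowers_eq_closure _), hker ▸ PExt.zpowersOfSq_le_center Γ w, ?_,
    ⟨PExt.toZMod4 Γ w, PExt.toZMod4_of_self Γ w, fun _ => PExt.toZMod4_of_of_ne Γ w, hinj⟩,
    fun K _ _ ι hι => hι.injOn_of_injOn (isPGroup_multiplicative_zmod_pow 2 2) _ hinj⟩
  rw [hker, PExt.zpowersOfSq, Nat.card_zpowers]
  exact orderOf_eq_prime hsq (ne_one_of_map hχ)

/-- The group `P` above is a central extension of `C(Γ)` by `ℤ/2`,
with kernel generated by `w²`; the homomorphism `P → ℤ/4` sending `w ↦ 1` and killing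
all other generators restricts injectively to this central `ℤ/2`; consequently the
kernel injects into the pro-`2` completion of `P`. -/
theorem pExt_central_extension {V : Type} [Fintype V] [DecidableEq V]
    (Γ : SimpleGraph V) (w : V) :
    ∃ π : PExt Γ w →* RACG Γ,
      (∀ u : V, π (PresentedGroup.of u) = RACG.gen Γ u) ∧
      Function.Surjective π ∧
      π.ker = Subgroup.closure {(PresentedGroup.of w : PExt Γ w) ^ 2} ∧
      π.ker ≤ Subgroup.center (PExt Γ w) ∧
      Nat.card π.ker = 2 ∧
      (∃ χ : PExt Γ w →* Multiplicative (ZMod 4),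
        χ (PresentedGroup.of w) = Multiplicative.ofAdd (1 : ZMod 4) ∧
        (∀ u : V, u ≠ w → χ (PresentedGroup.of u) = 1) ∧
        Set.InjOn χ (π.ker : Set (PExt Γ w))) ∧
      ∀ (K : Type) [Group K] [TopologicalSpace K] (ι : PExt Γ w →* K),
        IsProPCompletion 2 (PExt Γ w) K ι → Set.InjOn ι (π.ker : Set (PExt Γ w)) :=
  pExt_central_extension_general Γ w
end
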